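/- Let c ∈ (0, 1/2) be such that H_c(r) = log⁺ r for all r ∈ [0, ∞) ∖ (1/2, 3/2). Then: (i) H_c is nondecreasing on [0, ∞); (ii) 0 ≤ H_c(r) − log⁺ r ≤ log(3/2) for every r ≥ 0; and (iii) for every r ≥ 0 with H_c(r) ≥ log(3/2) one has H_c(r) = log⁺ r. -/
import Mathlib


/-- The cut-off function `h`: `h r = 0` for `r ≤ 3/4`,
`h r = (1/(4π)) (1 + exp((r−1)/((r−1)² − 1/16)))⁻¹` for `3/4 < r < 5/4`, and
`h r = 1/(4π)` for `r ≥ 5/4`. -/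
noncomputable def h (r : ℝ) : ℝ :=
  if r ≤ 3 / 4 then 0
  else if r < 5 / 4 then
    (1 / (4 * Real.pi)) * (1 + Real.exp ((r - 1) / ((r - 1) ^ 2 - 1 / 16)))⁻¹
  else 1 / (4 * Real.pi)

lemma h_nonneg (t : ℝ) : 0 ≤ h t := by
  unfold h; split_ifs <;> positivity

lemma h_le (t : ℝ) : 4 * Real.pi * h t ≤ 1 := by
  have hπ := Real.pi_pos
  unfold h; split_ifs with h1 h2
  · simp
  · rw [show 4 * Real.pi * (1 / (4 * Real.pi) *
        (1 + Real.exp ((t - 1) / ((t - 1) ^ 2 - 1 / 16)))⁻¹)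
      = (1 + Real.exp ((t - 1) / ((t - 1) ^ 2 - 1 / 16)))⁻¹ by field_simp]
    rw [inv_le_one_iff₀]
    right
    nlinarith [Real.exp_pos ((t - 1) / ((t - 1) ^ 2 - 1 / 16))]
  · rw [mul_one_div, div_self (by positivity)]

lemma h_ge (t : ℝ) (ht : 1 ≤ t) : 1 / (8 * Real.pi) ≤ h t := by
  have hπ := Real.pi_pos
  unfold h; split_ifs with h1 h2
  · linarith
  · have hnum : 0 ≤ t - 1 := by linarith
    have hden : (t - 1) ^ 2 - 1 / 16 < 0 := by nlinarith
    have hexp : (t - 1) / ((t - 1) ^ 2 - 1 / 16) ≤ 0 :=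
      div_nonpos_of_nonneg_of_nonpos hnum hden.le
    have : Real.exp ((t - 1) / ((t - 1) ^ 2 - 1 / 16)) ≤ 1 := Real.exp_le_one_iff.mpr hexp
    have h2' : (1 : ℝ)/2 ≤ (1 + Real.exp ((t - 1) / ((t - 1) ^ 2 - 1 / 16)))⁻¹ := by
      rw [le_inv_comm₀ (by norm_num) (by positivity)]
      linarith
    calc 1 / (8 * Real.pi) = (1 / (4 * Real.pi)) * (1/2) := by field_simp; ring
      _ ≤ _ := by
          apply mul_le_mul_of_nonneg_left h2' (by positivity)
  · gcongr; linarith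

lemma h_measurable : Measurable h := by
  unfold h
  apply Measurable.ite (measurableSet_le measurable_id measurable_const) measurable_const
  apply Measurable.ite (measurableSet_lt measurable_id measurable_const)
  · fun_prop
  · exact measurable_const

lemma h_eq_zero (t : ℝ) (ht : t ≤ 3/4) : h t = 0 := by
  unfold h; rw [if_pos ht]

lemma f_nonneg (c : ℝ) (hc : 0 < c) (s : ℝ) : 0 ≤ 4 * Real.pi * h (s - c) / s := by
  rcases le_or_gt (s - c) (3/4) with hs | hs
  · rw [h_eq_zero _ hs]; simp
  · have hs0 : 0 < s := by linarith
    have hh := h_nonneg (s - c)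
    have hpi := Real.pi_pos
    positivity

lemma f_bound (c : ℝ) (hc : 0 < c) (s : ℝ) : |4 * Real.pi * h (s - c) / s| ≤ 4/3 := by
  rw [abs_of_nonneg (f_nonneg c hc s)]
  rcases le_or_gt (s - c) (3/4) with hs | hs
  · rw [h_eq_zero _ hs]; norm_num
  · have hs0 : (3:ℝ)/4 < s := by linarith
    have h1 : 4 * Real.pi * h (s - c) / s ≤ 1 / s := by
      gcongr
      · exact h_le _
    have h2 : 1 / s ≤ 4/3 := by
      rw [div_le_div_iff₀ (by linarith) (by norm_num)]; linarith
    linarith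

lemma f_intervalIntegrable (c : ℝ) (hc : 0 < c) (a b : ℝ) :
    IntervalIntegrable (fun s => 4 * Real.pi * h (s - c) / s) MeasureTheory.volume a b := by
  rw [intervalIntegrable_iff]
  apply MeasureTheory.Measure.integrableOn_of_bounded
  · exact measure_Ioc_lt_top.ne
  · exact ((((measurable_const.mul
      (h_measurable.comp (measurable_id.sub measurable_const)))).div measurable_id)).aestronglyMeasurable
  · exact MeasureTheory.ae_of_all _ fun s => f_bound c hc s

/-- `H c r = ∫₀^r 4π · h(s − c)/s ds` (the integrand vanishes for `s ≤ 3/4`,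
so the integral is finite). -/
noncomputable def H (c r : ℝ) : ℝ := ∫ s in (0 : ℝ)..r, 4 * Real.pi * h (s - c) / s

/-- Let `c ∈ (0, 1/2)` be such that `H c r = log⁺ r` for all
`r ∈ [0, ∞) ∖ (1/2, 3/2)`.  Then: (i) `H c` is nondecreasing on `[0, ∞)`;
(ii) `0 ≤ H c r − log⁺ r ≤ log (3/2)` for every `r ≥ 0`; and (iii) for every `r ≥ 0` with
`H c r ≥ log (3/2)` one has `H c r = log⁺ r`. -/
theorem H_smoothing_properties
    (c : ℝ) (hc : c ∈ Set.Ioo (0 : ℝ) (1 / 2))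
    (hH : ∀ r : ℝ, 0 ≤ r → r ∉ Set.Ioo (1 / 2 : ℝ) (3 / 2) → H c r = max (Real.log r) 0) :
    MonotoneOn (H c) (Set.Ici 0) ∧
    (∀ r : ℝ, 0 ≤ r →
      0 ≤ H c r - max (Real.log r) 0 ∧ H c r - max (Real.log r) 0 ≤ Real.log (3 / 2)) ∧
    (∀ r : ℝ, 0 ≤ r → Real.log (3 / 2) ≤ H c r → H c r = max (Real.log r) 0) := by
  obtain ⟨hc0, hc2⟩ := hc
  have hc2' : c < 1/2 := by linarith
  set f : ℝ → ℝ := fun s => 4 * Real.pi * h (s - c) / s with hfdef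
  have hint : ∀ a b : ℝ, IntervalIntegrable f MeasureTheory.volume a b :=
    f_intervalIntegrable c hc0
  have Hdiff : ∀ a b : ℝ, H c a + ∫ s in a..b, f s = H c b := fun a b =>
    intervalIntegral.integral_add_adjacent_intervals (hint 0 a) (hint a b)
  have mono : MonotoneOn (H c) (Set.Ici 0) := by
    intro a _ b _ hab
    have h1 := Hdiff a b
    have h2 : 0 ≤ ∫ s in a..b, f s :=
      intervalIntegral.integral_nonneg hab (fun s _ => f_nonneg c hc0 s)
    linarith
  have Hhalf : H c (1/2) = 0 := by
    have := hH (1/2) (by norm_num) (by simp)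
    rw [this, max_eq_right (Real.log_nonpos (by norm_num) (by norm_num))]
  have H32 : H c (3/2) = Real.log (3/2) := by
    have := hH (3/2) (by norm_num) (by simp [Set.mem_Ioo])
    rw [this, max_eq_left (Real.log_nonneg (by norm_num))]
  -- strict bound
  have key : ∀ r, 1/2 < r → r < 3/2 → H c r < Real.log (3/2) := by
    intro r hr1 hr2
    set a := max r (1 + c) with ha
    have ha3 : a < 3/2 := max_lt hr2 (by linarith)
    have har : r ≤ a := le_max_left _ _
    have h1 : H c r + ∫ s in r..a, f s = H c a := Hdiff r a
    have h2 : H c a + ∫ s in a..(3/2), f s = H c (3/2) := Hdiff a (3/2)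
    have h3 : 0 ≤ ∫ s in r..a, f s :=
      intervalIntegral.integral_nonneg har (fun s _ => f_nonneg c hc0 s)
    have hpw : ∀ s ∈ Set.Icc a (3/2:ℝ), (1:ℝ)/3 ≤ f s := by
      intro s hs
      obtain ⟨hs1, hs2⟩ := hs
      have hs1' : 1 + c ≤ s := le_trans (le_max_right _ _) hs1
      have hge := h_ge (s - c) (by linarith)
      have hs0 : 0 < s := by linarith
      have hpi := Real.pi_pos
      have hb : (1:ℝ)/2 ≤ 4 * Real.pi * h (s - c) := by
        calc (1:ℝ)/2 = 4 * Real.pi * (1/(8*Real.pi)) := by field_simp; ring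
          _ ≤ 4 * Real.pi * h (s - c) := by gcongr
      have hdb : (1:ℝ)/2 / s ≤ 4 * Real.pi * h (s - c) / s := by gcongr
      have h5 : (1:ℝ)/3 ≤ 1/2 / s := by
        rw [le_div_iff₀ hs0]; linarith
      simpa [hfdef] using le_trans h5 hdb
    have h4 : (3/2 - a) * (1/3) ≤ ∫ s in a..(3/2), f s := by
      have := intervalIntegral.integral_mono_on ha3.le
        (intervalIntegrable_const (c := (1:ℝ)/3)) (hint a (3/2)) hpw
      simpa [intervalIntegral.integral_const, smul_eq_mul, mul_comm] using this
    have hpos : 0 < (3/2 - a) * (1/3) := by nlinarith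
    linarith
  -- lower bound on [1, 3/2)
  have low : ∀ r, 1 ≤ r → r < 3/2 → Real.log r ≤ H c r := by
    intro r hr1 hr2
    have h2 := Hdiff r (3/2)
    have hub : (∫ s in r..(3/2), f s) ≤ ∫ s in r..(3/2:ℝ), 1/s := by
      apply intervalIntegral.integral_mono_on hr2.le (hint r (3/2))
      · apply ContinuousOn.intervalIntegrable
        apply ContinuousOn.div continuousOn_const continuousOn_id
        intro s hs
        rw [Set.uIcc_of_le hr2.le] at hs
        have : (1:ℝ) ≤ s := le_trans hr1 hs.1
        positivity
      · intro s hs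
        have hs0 : 0 < s := by have := hs.1; linarith
        show f s ≤ 1 / s
        simp only [hfdef]
        gcongr
        exact h_le _
    have hlog : (∫ s in r..(3/2:ℝ), 1/s) = Real.log (3/2) - Real.log r := by
      rw [integral_one_div
        (Set.notMem_uIcc_of_lt (by linarith) (by norm_num))]
      rw [Real.log_div (by norm_num) (by linarith)]
    linarith
  refine ⟨mono, ?_, ?_⟩
  · intro r hr
    by_cases hmem : r ∈ Set.Ioo (1/2:ℝ) (3/2)
    · obtain ⟨hr1, hr2⟩ := hmem
      constructor
      · rcases le_or_gt 1 r with h1 | h1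
        · rw [max_eq_left (Real.log_nonneg h1)]; linarith [low r h1 hr2]
        · rw [max_eq_right (Real.log_nonpos hr h1.le)]
          have hm : H c (1/2) ≤ H c r :=
            mono (by norm_num) (by exact hr) (by linarith)
          linarith
      · have hle : H c r ≤ Real.log (3/2) := (key r hr1 hr2).le
        have hmx : 0 ≤ max (Real.log r) 0 := le_max_right _ _
        linarith
    · rw [hH r hr hmem]
      refine ⟨by linarith, ?_⟩
      have := Real.log_nonneg (show (1:ℝ) ≤ 3/2 by norm_num)
      linarith
  · intro r hr hge
    by_cases hmem : r ∈ Set.Ioo (1/2:ℝ) (3/2)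
    · exact absurd hge (not_le.mpr (key r hmem.1 hmem.2))
    · exact hH r hr hmem
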